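/- (Proposition 3, non-singularity of the pilot-based PPM FIM.) Assume D ≥ 1, P + D ≥ 2 and T_f ≠ 0. Then the matrix J_{ppm,p} has trivial kernel (full column rank). Consequently, for every Hermitian positive definite complex matrix M indexed by (Fin L) ⊕ (Fin L) ⊕ (Fin (P+D) × Fin L) ⊕ (Fin L) ⊕ (Fin L), the matrix J_{ppm,p}ᵀ · M · J_{ppm,p} (equal to J_{ppm,p}ᴴ · M · J_{ppm,p} since J_{ppm,p} has real entries) is Hermitian positive definite, and in particular invertible: pilots decouple the data from the sensing parameters. -/

import Mathlib

open Matrix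
open scoped ComplexOrder

noncomputable section

/-- The matrix `H`: first column all ones, agreeing with the identity elsewhere. -/
def Hmat (L : ℕ) : Matrix (Fin L) (Fin L) ℂ :=
  Matrix.of fun i j => if j.val = 0 ∨ i = j then 1 else 0

/-- The all-ones column vector `E` of length `L`. -/
def Emat (L : ℕ) : Matrix (Fin L) (Fin 1) ℂ :=
  Matrix.of fun _ _ => 1

/-- Index of the observation vector in the pilot-based systems:
pilot delays, data delays, phases, pilot amplitudes, data amplitudes. -/
abbrev PIdx (L P D : ℕ) :=
  Fin L ⊕ Fin L ⊕ (Fin (P + D) × Fin L) ⊕ Fin L ⊕ Fin L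

/-- The Jacobian matrix of the pilot-based PPM ISAC case: row blocks `[H, 0, 0, 0]` for the
pilot delays, `[H, E, 0, 0]` for the data delays, `[0, 0, (2πκT_f)·H, 0]` for the phases,
`[0, 0, 0, I_L]` for the pilot and data amplitudes. -/
def JppmP (L P D : ℕ) (Tf : ℝ) :
    Matrix (PIdx L P D) (Fin L ⊕ Fin 1 ⊕ Fin L ⊕ Fin L) ℂ :=
  Matrix.of fun i j =>
    match i, j with
    | Sum.inl a, Sum.inl b => Hmat L a b
    | Sum.inr (Sum.inl a), Sum.inl b => Hmat L a b
    | Sum.inr (Sum.inl a), Sum.inr (Sum.inl b) => Emat L a b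
    | Sum.inr (Sum.inr (Sum.inl (κ, a))), Sum.inr (Sum.inr (Sum.inl b)) =>
        ((2 * Real.pi * (κ.1 : ℝ) * Tf : ℝ) : ℂ) * Hmat L a b
    | Sum.inr (Sum.inr (Sum.inr (Sum.inl a))), Sum.inr (Sum.inr (Sum.inr b)) =>
        (1 : Matrix (Fin L) (Fin L) ℂ) a b
    | Sum.inr (Sum.inr (Sum.inr (Sum.inr a))), Sum.inr (Sum.inr (Sum.inr b)) =>
        (1 : Matrix (Fin L) (Fin L) ℂ) a b
    | _, _ => 0

/-!
`H` is lower unitriangular, hence invertible. Write `v = (a, b, c, d)` and read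
`J_{ppm,p} v = 0` block by block: the pilot-delay rows give `H a = 0`, so `a = 0`; any data-delay
row then reads `b = 0`; the phase rows with `κ = 1` give `2πT_f · H c = 0`, so `c = 0`; and the
pilot-amplitude rows read `d = 0`. So `J_{ppm,p}` is injective, and as its entries are real,
`J_{ppm,p}ᵀ M J_{ppm,p} = J_{ppm,p}ᴴ M J_{ppm,p}` is positive definite for positive definite `M`.
-/

lemma Hmat_isLowerTriangular (L : ℕ) : (Hmat L).IsLowerTriangular := by
  intro i j (hij : i < j)
  have hj : j.val ≠ 0 := by omega
  simp [Hmat, hj, hij.ne]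

lemma det_Hmat (L : ℕ) : (Hmat L).det = 1 := by
  rw [det_of_isLowerTriangular _ (Hmat_isLowerTriangular L)]
  simp [Hmat]

lemma Hmat_mulVec_injective (L : ℕ) : Function.Injective (Hmat L).mulVec :=
  mulVec_injective_iff_isUnit.mpr <| (isUnit_iff_isUnit_det _).mpr <| by simp [det_Hmat]

section JppmP

variable {L P D : ℕ} {Tf : ℝ} (v : Fin L ⊕ Fin 1 ⊕ Fin L ⊕ Fin L → ℂ)

lemma JppmP_mulVec_pilotDelay (i : Fin L) :
    (JppmP L P D Tf *ᵥ v) (Sum.inl i) = (Hmat L *ᵥ (v ∘ Sum.inl)) i := by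
  simp [JppmP, mulVec, dotProduct, Fintype.sum_sum_type]

lemma JppmP_mulVec_dataDelay (i : Fin L) :
    (JppmP L P D Tf *ᵥ v) (Sum.inr (Sum.inl i)) =
      (Hmat L *ᵥ (v ∘ Sum.inl)) i + v (Sum.inr (Sum.inl 0)) := by
  simp [JppmP, Emat, mulVec, dotProduct, Fintype.sum_sum_type]

lemma JppmP_mulVec_phase (κ : Fin (P + D)) (i : Fin L) :
    (JppmP L P D Tf *ᵥ v) (Sum.inr (Sum.inr (Sum.inl (κ, i)))) =
      ((2 * Real.pi * κ * Tf : ℝ) : ℂ) *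
        (Hmat L *ᵥ (v ∘ Sum.inr ∘ Sum.inr ∘ Sum.inl)) i := by
  simp [JppmP, mulVec, dotProduct, Fintype.sum_sum_type, Finset.mul_sum, mul_assoc]

lemma JppmP_mulVec_pilotAmplitude (i : Fin L) :
    (JppmP L P D Tf *ᵥ v) (Sum.inr (Sum.inr (Sum.inr (Sum.inl i)))) =
      v (Sum.inr (Sum.inr (Sum.inr i))) := by
  simp [JppmP, mulVec, dotProduct, Fintype.sum_sum_type, one_apply]

variable {v}

theorem eq_zero_of_JppmP_mulVec_eq_zero (hL : 1 ≤ L) (hPD : 2 ≤ P + D) (hTf : Tf ≠ 0)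
    (hv : JppmP L P D Tf *ᵥ v = 0) : v = 0 := by
  have hdelay : v ∘ Sum.inl = 0 := Hmat_mulVec_injective L <| by
    ext i
    simpa [JppmP_mulVec_pilotDelay] using congrFun hv (Sum.inl i)
  have hdata : v (Sum.inr (Sum.inl 0)) = 0 := by
    simpa [JppmP_mulVec_dataDelay, hdelay] using congrFun hv (Sum.inr (Sum.inl ⟨0, hL⟩))
  have hphase : v ∘ Sum.inr ∘ Sum.inr ∘ Sum.inl = 0 := Hmat_mulVec_injective L <| by
    ext i
    have h := congrFun hv (Sum.inr (Sum.inr (Sum.inl (⟨1, hPD⟩, i))))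
    simpa [JppmP_mulVec_phase, Real.pi_ne_zero, hTf] using h
  ext (i | i | i | i)
  · exact congrFun hdelay i
  · simpa [Subsingleton.elim i 0] using hdata
  · exact congrFun hphase i
  · simpa [JppmP_mulVec_pilotAmplitude] using
      congrFun hv (Sum.inr (Sum.inr (Sum.inr (Sum.inl i))))

theorem JppmP_mulVec_injective (hL : 1 ≤ L) (hPD : 2 ≤ P + D) (hTf : Tf ≠ 0) :
    Function.Injective (JppmP L P D Tf).mulVec := fun x y h =>
  sub_eq_zero.mp <| eq_zero_of_JppmP_mulVec_eq_zero hL hPD hTf <| by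
    rw [mulVec_sub, h, sub_self]

lemma JppmP_conjTranspose : (JppmP L P D Tf)ᴴ = (JppmP L P D Tf)ᵀ := by
  ext j i
  rcases i with a | a | ⟨κ, a⟩ | a | a <;> rcases j with b | b | b | b <;>
    simp [JppmP, Hmat, Emat, one_apply, apply_ite (starRingEnd ℂ), map_ofNat]

end JppmP

theorem ppm_pilot_fim_nonsingular_general (L P D : ℕ) (hL : 1 ≤ L) (hPD : 2 ≤ P + D)
    (Tf : ℝ) (hTf : Tf ≠ 0) :
    (∀ v : (Fin L ⊕ Fin 1 ⊕ Fin L ⊕ Fin L) → ℂ,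
        (JppmP L P D Tf).mulVec v = 0 → v = 0) ∧
      ∀ M : Matrix (PIdx L P D) (PIdx L P D) ℂ, M.PosDef →
        ((JppmP L P D Tf)ᵀ * M * JppmP L P D Tf).PosDef ∧
          IsUnit ((JppmP L P D Tf)ᵀ * M * JppmP L P D Tf) := by
  refine ⟨fun v => eq_zero_of_JppmP_mulVec_eq_zero hL hPD hTf, fun M hM => ?_⟩
  have hpos := hM.conjTranspose_mul_mul_same (JppmP_mulVec_injective hL hPD hTf)
  rw [JppmP_conjTranspose] at hpos
  exact ⟨hpos, hpos.isUnit⟩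

/-- Proposition 3, non-singularity of the pilot-based PPM FIM: `J_{ppm,p}` has trivial kernel,
and for every Hermitian positive definite `M` the matrix `J_{ppm,p}ᵀ · M · J_{ppm,p}` is
Hermitian positive definite, in particular invertible. -/
theorem ppm_pilot_fim_nonsingular (L P D : ℕ) (hL : 1 ≤ L) (hD : 1 ≤ D) (hPD : 2 ≤ P + D)
    (Tf : ℝ) (hTf : Tf ≠ 0) :
    (∀ v : (Fin L ⊕ Fin 1 ⊕ Fin L ⊕ Fin L) → ℂ,
        (JppmP L P D Tf).mulVec v = 0 → v = 0) ∧
      ∀ M : Matrix (PIdx L P D) (PIdx L P D) ℂ, M.PosDef →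
        ((JppmP L P D Tf)ᵀ * M * JppmP L P D Tf).PosDef ∧
          IsUnit ((JppmP L P D Tf)ᵀ * M * JppmP L P D Tf) :=
  ppm_pilot_fim_nonsingular_general L P D hL hPD Tf hTf
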